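/- Let R be a commutative ring, s ∈ R, and let S = R[X]/(X² - sX). Suppose v = e₁ + s·w ∈ Rᵈ is a unimodular row over R (where e₁ is the first standard basis vector and w ∈ Rᵈ). Then the row u(X) = e₁ + X·w is a unimodular row over S. -/

import Mathlib

open Matrix Polynomial

/-- A row `v ∈ Rⁿ` is unimodular if `∑ vᵢ wᵢ = 1` for some row `w`. -/
def IsUnimodular {R : Type*} [CommRing R] {n : ℕ} (v : Fin n → R) : Prop :=
  ∃ w : Fin n → R, ∑ i, v i * w i = 1

/-- The first standard basis row `e₁ = (1,0,…,0)`. -/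
def e1 (R : Type*) [CommRing R] (n : ℕ) : Fin n → R :=
  fun i => if (i : ℕ) = 0 then 1 else 0

/-- Unimodular rows relative to an ideal `I`: unimodular and congruent to `e₁` mod `I`. -/
def IsRelUnimodular {R : Type*} [CommRing R] {n : ℕ} (I : Ideal R) (v : Fin n → R) : Prop :=
  IsUnimodular v ∧ ∀ i, v i - e1 R n i ∈ I

/-- The elementary group `Eₙ(R)`, as a subgroup of `GLₙ(R)` generated by the
elementary matrices `1 + x Eᵢⱼ`, `i ≠ j`. -/
def ElementaryGroup (n : ℕ) (R : Type*) [CommRing R] :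
    Subgroup (Matrix.GeneralLinearGroup (Fin n) R) :=
  Subgroup.closure {g | ∃ i j : Fin n, i ≠ j ∧ ∃ x : R,
    (g : Matrix (Fin n) (Fin n) R) = 1 + Matrix.single i j x}

/-- The relative elementary group `Eₙ(R, I)`: the normal closure in `Eₙ(R)` of the
subgroup generated by elementary matrices with off-diagonal entry in `I`. -/
def RelElementaryGroup (n : ℕ) (R : Type*) [CommRing R] (I : Ideal R) :
    Subgroup (Matrix.GeneralLinearGroup (Fin n) R) :=
  Subgroup.closure {g | ∃ ε ∈ ElementaryGroup n R, ∃ e : Matrix.GeneralLinearGroup (Fin n) R,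
    (∃ i j : Fin n, i ≠ j ∧ ∃ x ∈ I,
      (e : Matrix (Fin n) (Fin n) R) = 1 + Matrix.single i j x) ∧ g = ε * e * ε⁻¹}

/-- The standard symplectic form `ψ_m` (block diagonal with blocks `[[0,1],[-1,0]]`),
written down entrywise for an `n × n` matrix (with `n = 2m`). -/
def psiMat (R : Type*) [CommRing R] (n : ℕ) : Matrix (Fin n) (Fin n) R :=
  Matrix.of fun i j =>
    if (i : ℕ) % 2 = 0 ∧ (j : ℕ) = (i : ℕ) + 1 then 1
    else if (i : ℕ) % 2 = 1 ∧ (j : ℕ) + 1 = (i : ℕ) then -1 else 0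

/-- A matrix is symplectic if `αᵀ ψ α = ψ`. -/
def IsSymplectic {R : Type*} [CommRing R] {n : ℕ} (A : Matrix (Fin n) (Fin n) R) : Prop :=
  A.transpose * psiMat R n * A = psiMat R n

/-- The permutation `σ` with `σ(2i) = 2i-1`, `σ(2i-1) = 2i` (1-indexed), written
0-indexed on `Fin n`: it swaps `2k ↔ 2k+1`. -/
def sigmaF (n : ℕ) (i : Fin n) : Fin n :=
  if h : (if (i : ℕ) % 2 = 0 then (i : ℕ) + 1 else (i : ℕ) - 1) < n
  then ⟨_, h⟩ else i

/-- The elementary symplectic matrix `se_{ij}(z)`. -/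
def seMat (n : ℕ) (R : Type*) [CommRing R] (i j : Fin n) (z : R) :
    Matrix (Fin n) (Fin n) R :=
  if i = sigmaF n j then 1 + Matrix.single i j z
  else 1 + Matrix.single i j z -
    Matrix.single (sigmaF n j) (sigmaF n i) ((-1 : R) ^ ((i : ℕ) + (j : ℕ)) * z)

/-- The elementary symplectic group `ESpₙ(R)` generated by the `se_{ij}(z)`. -/
def ESpGroup (n : ℕ) (R : Type*) [CommRing R] :
    Subgroup (Matrix.GeneralLinearGroup (Fin n) R) :=
  Subgroup.closure {g | ∃ i j : Fin n, i ≠ j ∧ ∃ z : R,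
    (g : Matrix (Fin n) (Fin n) R) = seMat n R i j z}

/-- `I_k ⊕ α ⊕ I` : the `n × n` matrix with `α` placed in rows/columns `k, …, k+d-1`
and `1`'s on the rest of the diagonal.  `idPad 0 n α` is the stabilization `α ⊥ I` and
`idPad k (k+d) α` is `I_k ⊥ α`. -/
def idPad {R : Type*} [CommRing R] {d : ℕ} (k n : ℕ) (α : Matrix (Fin d) (Fin d) R) :
    Matrix (Fin n) (Fin n) R :=
  Matrix.of fun i j =>
    if h : k ≤ (i : ℕ) ∧ k ≤ (j : ℕ) ∧ (i : ℕ) - k < d ∧ (j : ℕ) - k < d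
    then α ⟨(i : ℕ) - k, h.2.2.1⟩ ⟨(j : ℕ) - k, h.2.2.2⟩
    else if (i : ℕ) = (j : ℕ) then 1 else 0

/-- A square matrix of size `d` lies in the stable elementary group `E(R)` if some
stabilization `α ⊥ I_m` is a product of elementary matrices. -/
def InStableElementary {R : Type*} [CommRing R] {d : ℕ}
    (α : Matrix (Fin d) (Fin d) R) : Prop :=
  ∃ m : ℕ, ∃ g ∈ ElementaryGroup (d + m) R,
    (g : Matrix (Fin (d + m)) (Fin (d + m)) R) = idPad 0 (d + m) α

/-- A Noetherian local ring is regular if its maximal ideal is generated by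
(Krull dimension)-many elements. -/
def IsRegularLocal (A : Type*) [CommRing A] [IsLocalRing A] : Prop :=
  IsNoetherianRing A ∧ ∃ s : Finset A, Ideal.span (s : Set A) = IsLocalRing.maximalIdeal A ∧
    (s.card : WithBot (WithTop ℕ)) = ringKrullDim A

/-- `J` defines the singular locus of `R`: a prime `P` is a regular (smooth) point
iff `J ⊄ P`. -/
def DefinesSingularLocus {R : Type*} [CommRing R] (J : Ideal R) : Prop :=
  ∀ (P : Ideal R) (hP : P.IsPrime),
    haveI := hP
    (¬ J ≤ P ↔ IsRegularLocal (Localization.AtPrime P))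

/-!
Write `x` for the image of `X`, so `x (x - s) = 0`. If `b` pairs `e₁ + s w` to `1`, then pairing
`u = e₁ + x w` with `e₁` and with `b` gives `p = 1 + x w₀` and `q = 1 - (s - x) (w ⬝ᵥ b)`. The product
`(1 - p) (1 - q)` is a multiple of `x (x - s)`, hence `0`, and then `1 = p + q - p q` lies in the
ideal generated by the entries of `u`.
-/

namespace IsUnimodular

variable {R S : Type*} [CommRing R] [CommRing S] {n : ℕ}

theorem of_mul_eq_zero {u a b : Fin n → S} (h : (1 - u ⬝ᵥ a) * (1 - u ⬝ᵥ b) = 0) :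
    IsUnimodular u := by
  refine ⟨a + b - (u ⬝ᵥ a) • b, ?_⟩
  change u ⬝ᵥ (a + b - (u ⬝ᵥ a) • b) = 1
  simp only [dotProduct_add, dotProduct_sub, dotProduct_smul, smul_eq_mul]
  linear_combination -h

theorem map (f : R →+* S) {v : Fin n → R} (hv : IsUnimodular v) : IsUnimodular (f ∘ v) := by
  obtain ⟨b, hb⟩ := hv
  refine ⟨f ∘ b, ?_⟩
  simpa only [Function.comp_apply, ← map_mul, ← map_sum, map_one] using congrArg f hb

end IsUnimodular

theorem e1_succ (R : Type*) [CommRing R] (n : ℕ) : e1 R (n + 1) = Pi.single 0 1 := by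
  funext i
  rcases Fin.eq_zero_or_eq_succ i with rfl | ⟨j, rfl⟩ <;> simp [e1]

theorem map_e1 {R S : Type*} [CommRing R] [CommRing S] (f : R →+* S) (n : ℕ) :
    f ∘ e1 R n = e1 S n := by
  funext i
  simp only [Function.comp_apply, e1]
  split_ifs <;> simp

theorem isUnimodular_e1_add_smul_of_mul_sub_eq_zero {S : Type*} [CommRing S] {n : ℕ}
    {x t : S} (hx : x * (x - t) = 0) {w : Fin n → S}
    (hv : IsUnimodular (e1 S n + t • w)) : IsUnimodular (e1 S n + x • w) := by
  obtain ⟨b, hb⟩ := hv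
  change (e1 S n + t • w) ⬝ᵥ b = 1 at hb
  cases n with
  | zero =>
    have : Subsingleton S := subsingleton_of_zero_eq_one (by simpa using hb)
    exact ⟨0, Subsingleton.elim _ _⟩
  | succ n =>
    refine IsUnimodular.of_mul_eq_zero (a := e1 S (n + 1)) (b := b) ?_
    simp only [e1_succ, add_dotProduct, smul_dotProduct, dotProduct_single,
      single_dotProduct, smul_eq_mul, Pi.add_apply, Pi.smul_apply, Pi.single_eq_same] at hb ⊢
    linear_combination (w 0 * (w ⬝ᵥ b)) * hx + (x * w 0) * hb

theorem stmt_0 (R : Type*) [CommRing R] (d : ℕ) (s : R) (w : Fin d → R)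
    (hv : IsUnimodular (fun i => e1 R d i + s * w i)) :
    IsUnimodular (fun i =>
      (Ideal.Quotient.mk (Ideal.span {(X : R[X]) ^ 2 - C s * X}))
        (C (e1 R d i) + X * C (w i))) := by
  set π := Ideal.Quotient.mk (Ideal.span {(X : R[X]) ^ 2 - C s * X})
  set φ := π.comp C
  have hX : π X * (π X - φ s) = 0 := by
    simp only [φ, RingHom.comp_apply, ← map_mul, ← map_sub]
    exact Ideal.Quotient.eq_zero_iff_mem.mpr (Ideal.mem_span_singleton.mpr ⟨1, by ring⟩)
  have hφv := hv.map φ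
  have hrow : φ ∘ (fun i => e1 R d i + s * w i) = e1 _ d + φ s • (φ ∘ w) := by
    rw [← map_e1 φ]; funext i; simp
  rw [hrow] at hφv
  convert isUnimodular_e1_add_smul_of_mul_sub_eq_zero hX hφv using 1
  rw [← map_e1 φ]; funext i; simp [φ, mul_comm (π X)]
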